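/- arXiv:math/0302137 — 4 statements merged into one kernel-verified Lean document; each statement's English description precedes it below -/
import Mathlib

section
/- Let N ≥ 3, Λ_N = (N-2)^2/4, A ∈ (0, Λ_N), ν = (1 - A/Λ_N)^{1/2}, and define w(x) = (N(N-2)ν^2)^{(N-2)/4} / (|x|^{1-ν}(1+|x|^{2ν}))^{(N-2)/2}. Then w is a positive classical solution on R^N \ {0} of the equation -Δw = (A/|x|^2) w + w^{2^*-1}, where 2^* = 2N/(N-2). -/
open MeasureTheory Real Filter
open scoped RealInnerProductSpace
noncomputable section

def lap {N : ℕ} (u : EuclideanSpace ℝ (Fin N) → ℝ) (x : EuclideanSpace ℝ (Fin N)) : ℝ :=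
  ∑ i : Fin N, fderiv ℝ (fun y => fderiv ℝ u y (EuclideanSpace.single i 1)) x
    (EuclideanSpace.single i 1)

def D12 {N : ℕ} (u : EuclideanSpace ℝ (Fin N) → ℝ) : Prop :=
  Differentiable ℝ u ∧ MemLp u (ENNReal.ofReal (2 * N / ((N : ℝ) - 2))) volume ∧
    Integrable (fun x => ‖gradient u x‖ ^ 2) volume

/-- Generic derivative of `C * s^a * (1+s^ν)^b * (c + d s^ν)` for `s > 0`. -/
lemma aux_hasDerivAt (C a b c d nu : ℝ) {s : ℝ} (hs : 0 < s) :
    HasDerivAt (fun s : ℝ => C * s ^ a * (1 + s ^ nu) ^ b * (c + d * s ^ nu))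
      (C * (s ^ (a - 1) * (1 + s ^ nu) ^ (b - 1) *
        (a * (1 + s ^ nu) * (c + d * s ^ nu) + b * nu * s ^ nu * (c + d * s ^ nu)
          + d * nu * s ^ nu * (1 + s ^ nu)))) s := by
  have ht : (0:ℝ) < s ^ nu := Real.rpow_pos_of_pos hs nu
  have hu : (0:ℝ) < 1 + s ^ nu := by linarith
  have h1 : HasDerivAt (fun s : ℝ => C * s ^ a) (C * (a * s ^ (a - 1))) s :=
    (Real.hasDerivAt_rpow_const (Or.inl hs.ne')).const_mul C
  have hn : HasDerivAt (fun s : ℝ => s ^ nu) (nu * s ^ (nu - 1)) s :=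
    Real.hasDerivAt_rpow_const (Or.inl hs.ne')
  have h2 : HasDerivAt (fun s : ℝ => 1 + s ^ nu) (nu * s ^ (nu - 1)) s := hn.const_add 1
  have h3 : HasDerivAt (fun s : ℝ => (1 + s ^ nu) ^ b)
      ((nu * s ^ (nu - 1)) * b * (1 + s ^ nu) ^ (b - 1)) s := h2.rpow_const (Or.inl hu.ne')
  have h4 : HasDerivAt (fun s : ℝ => c + d * s ^ nu) (d * (nu * s ^ (nu - 1))) s :=
    (hn.const_mul d).const_add c
  have h5 := (h1.mul h3).mul h4
  refine h5.congr_deriv ?_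
  simp only [Pi.mul_apply]
  have e1 : s ^ (a - 1) = s ^ a / s := by
    rw [Real.rpow_sub hs, Real.rpow_one]
  have e2 : s ^ (nu - 1) = s ^ nu / s := by
    rw [Real.rpow_sub hs, Real.rpow_one]
  have e3 : (1 + s ^ nu) ^ (b - 1) = (1 + s ^ nu) ^ b / (1 + s ^ nu) := by
    rw [Real.rpow_sub hu, Real.rpow_one]
  rw [e1, e2, e3]
  field_simp

lemma deriv_one' (C al be nu : ℝ) {s : ℝ} (hs : 0 < s) :
    HasDerivAt (fun s : ℝ => C * s ^ (-al) * (1 + s ^ nu) ^ (-be))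
      (C * s ^ (-al - 1) * (1 + s ^ nu) ^ (-be - 1) * (-al + -(al + be * nu) * s ^ nu)) s := by
  have h := aux_hasDerivAt C (-al) (-be) 1 0 nu hs
  have hfun : (fun s : ℝ => C * s ^ (-al) * (1 + s ^ nu) ^ (-be) * (1 + 0 * s ^ nu))
      = fun s : ℝ => C * s ^ (-al) * (1 + s ^ nu) ^ (-be) := by
    funext y; ring
  rw [hfun] at h
  convert h using 1
  rw [show -al - 1 = -al - 1 from rfl]
  ring

lemma deriv_two (C al be nu : ℝ) {s : ℝ} (hs : 0 < s) :
    HasDerivAt (fun s : ℝ =>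
        C * s ^ (-al - 1) * (1 + s ^ nu) ^ (-be - 1) * (-al + -(al + be * nu) * s ^ nu))
      (C * s ^ (-al - 2) * (1 + s ^ nu) ^ (-be - 2) *
        (al * (al + 1)
          + ((-al - 1) * (-al + -(al + be * nu)) + (-be - 1) * nu * (-al)
              + -(al + be * nu) * nu) * s ^ nu
          + ((-al - 1) + (-be - 1) * nu + nu) * -(al + be * nu) * (s ^ nu) ^ 2)) s := by
  have h := aux_hasDerivAt C (-al - 1) (-be - 1) (-al) (-(al + be * nu)) nu hs
  convert h using 1
  rw [show -al - 1 - 1 = -al - 2 by ring, show -be - 1 - 1 = -be - 2 by ring]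
  ring

/-- The key algebraic identity satisfied by the Terracini solution, in radial form. -/
lemma key_identity (N A nu al be C s : ℝ) (hN : 3 ≤ N) (hs : 0 < s) (hnu : 0 < nu)
    (hal : al = (1 - nu) * (N - 2) / 4) (hbe : be = (N - 2) / 2)
    (hC : C = (N * (N - 2) * nu ^ 2) ^ ((N - 2) / 4))
    (hA : A = (N - 2) ^ 2 / 4 * (1 - nu ^ 2)) :
    -(N * (2 * (C * s ^ (-al - 1) * (1 + s ^ nu) ^ (-be - 1) * (-al + -(al + be * nu) * s ^ nu)))
      + 4 * (C * s ^ (-al - 2) * (1 + s ^ nu) ^ (-be - 2) *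
        (al * (al + 1)
          + ((-al - 1) * (-al + -(al + be * nu)) + (-be - 1) * nu * (-al)
              + -(al + be * nu) * nu) * s ^ nu
          + ((-al - 1) + (-be - 1) * nu + nu) * -(al + be * nu) * (s ^ nu) ^ 2)) * s)
    = A / s * (C * s ^ (-al) * (1 + s ^ nu) ^ (-be))
      + (C * s ^ (-al) * (1 + s ^ nu) ^ (-be)) ^ (2 * N / (N - 2) - 1) := by
  have hN2 : (0:ℝ) < N - 2 := by linarith
  have ht : (0:ℝ) < s ^ nu := Real.rpow_pos_of_pos hs nu
  have hu : (0:ℝ) < 1 + s ^ nu := by linarith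
  have hB : (0:ℝ) < N * (N - 2) * nu ^ 2 := by
    have h1 : (0:ℝ) < N := by linarith
    have h2 : (0:ℝ) < nu ^ 2 := pow_pos hnu 2
    positivity
  have hCpos : (0:ℝ) < C := hC ▸ Real.rpow_pos_of_pos hB _
  have hs2 : s ^ (-al) = s ^ (-al - 2) * (s * s) := by
    rw [show -al = -al - 2 + 1 + 1 by ring, Real.rpow_add_one hs.ne', Real.rpow_add_one hs.ne']
    ring
  have hs1 : s ^ (-al - 1) = s ^ (-al - 2) * s := by
    rw [show -al - 1 = -al - 2 + 1 by ring, Real.rpow_add_one hs.ne']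
  have hu2 : (1 + s ^ nu) ^ (-be) = (1 + s ^ nu) ^ (-be - 2) * ((1 + s ^ nu) * (1 + s ^ nu)) := by
    rw [show -be = -be - 2 + 1 + 1 by ring, Real.rpow_add_one hu.ne', Real.rpow_add_one hu.ne']
    ring
  have hu1 : (1 + s ^ nu) ^ (-be - 1) = (1 + s ^ nu) ^ (-be - 2) * (1 + s ^ nu) := by
    rw [show -be - 1 = -be - 2 + 1 by ring, Real.rpow_add_one hu.ne']
  have hP0pow : (C * s ^ (-al) * (1 + s ^ nu) ^ (-be)) ^ (2 * N / (N - 2) - 1)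
      = C * (N * (N - 2) * nu ^ 2) * (s ^ (-al - 2) * (s * s ^ nu))
          * (1 + s ^ nu) ^ (-be - 2) := by
    rw [Real.mul_rpow (by positivity) (Real.rpow_pos_of_pos hu _).le,
      Real.mul_rpow hCpos.le (Real.rpow_pos_of_pos hs _).le,
      ← Real.rpow_mul hs.le, ← Real.rpow_mul hu.le, hC, ← Real.rpow_mul hB.le]
    have e1 : (N - 2) / 4 * (2 * N / (N - 2) - 1) = (N - 2) / 4 + 1 := by
      field_simp; ring
    have e2 : -al * (2 * N / (N - 2) - 1) = -al - 2 + (1 + nu) := by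
      rw [hal]; field_simp; ring
    have e3 : -be * (2 * N / (N - 2) - 1) = -be - 2 := by
      rw [hbe]; field_simp; ring
    rw [e1, e2, e3, Real.rpow_add hB, Real.rpow_one,
      Real.rpow_add hs (-al - 2) (1 + nu), Real.rpow_add hs 1 nu, Real.rpow_one, ← hC]
  rw [hP0pow, hs2, hs1, hu2, hu1]
  have hXY : (0:ℝ) < s ^ (-al - 2) * (1 + s ^ nu) ^ (-be - 2) := by positivity
  field_simp
  rw [hA, hal, hbe]
  ring

theorem terracini_solution (N : ℕ) (hN : 3 ≤ N) (A : ℝ)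
    (hA : 0 < A) (hA' : A < ((N : ℝ) - 2) ^ 2 / 4)
    (ν : ℝ) (hν : ν = Real.sqrt (1 - A / (((N : ℝ) - 2) ^ 2 / 4)))
    (w : EuclideanSpace ℝ (Fin N) → ℝ)
    (hw : w = fun x => ((N : ℝ) * ((N : ℝ) - 2) * ν ^ 2) ^ (((N : ℝ) - 2) / 4) /
      (‖x‖ ^ ((1 : ℝ) - ν) * (1 + ‖x‖ ^ (2 * ν))) ^ (((N : ℝ) - 2) / 2)) :
    ∀ x : EuclideanSpace ℝ (Fin N), x ≠ 0 →
      0 < w x ∧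
      -lap w x = A / ‖x‖ ^ 2 * w x + w x ^ (2 * (N : ℝ) / ((N : ℝ) - 2) - 1) := by
  have hN3 : (3:ℝ) ≤ (N:ℝ) := by exact_mod_cast hN
  have hN2 : (0:ℝ) < (N:ℝ) - 2 := by linarith
  have hΛ : (0:ℝ) < ((N:ℝ) - 2) ^ 2 / 4 := by positivity
  have hfrac : A / (((N:ℝ) - 2) ^ 2 / 4) < 1 := (div_lt_one hΛ).mpr hA'
  have hνpos : 0 < ν := by
    rw [hν]; exact Real.sqrt_pos.mpr (by linarith)
  have hν2 : ν ^ 2 = 1 - A / (((N:ℝ) - 2) ^ 2 / 4) := by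
    rw [hν, sq_sqrt (by linarith : (0:ℝ) ≤ 1 - A / (((N:ℝ) - 2) ^ 2 / 4))]
  have hAeq : A = ((N:ℝ) - 2) ^ 2 / 4 * (1 - ν ^ 2) := by
    rw [hν2]; field_simp; ring
  set al : ℝ := (1 - ν) * ((N:ℝ) - 2) / 4 with hal
  set be : ℝ := ((N:ℝ) - 2) / 2 with hbe
  set C : ℝ := ((N:ℝ) * ((N:ℝ) - 2) * ν ^ 2) ^ (((N:ℝ) - 2) / 4) with hC
  have hB : (0:ℝ) < (N:ℝ) * ((N:ℝ) - 2) * ν ^ 2 := by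
    have h1 : (0:ℝ) < (N:ℝ) := by linarith
    have h2 : (0:ℝ) < ν ^ 2 := pow_pos hνpos 2
    positivity
  have hCpos : (0:ℝ) < C := Real.rpow_pos_of_pos hB _
  -- w agrees with the radial profile composed with the squared norm, away from 0
  have hwP : ∀ z : EuclideanSpace ℝ (Fin N), z ≠ 0 →
      w z = C * ((‖z‖ ^ 2 : ℝ)) ^ (-al) * (1 + ((‖z‖ ^ 2 : ℝ)) ^ ν) ^ (-be) := by
    intro z hz
    have hr : 0 < ‖z‖ := norm_pos_iff.mpr hz
    simp only [hw]
    have k0 : ((‖z‖ ^ 2 : ℝ)) ^ ν = ‖z‖ ^ (2 * ν) := by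
      rw [← Real.rpow_natCast ‖z‖ 2, ← Real.rpow_mul hr.le]
      norm_num
    have k1 : ((‖z‖ ^ 2 : ℝ)) ^ (-al) = (‖z‖ ^ ((1:ℝ) - ν)) ^ (-be) := by
      rw [← Real.rpow_natCast ‖z‖ 2, ← Real.rpow_mul hr.le, ← Real.rpow_mul hr.le]
      congr 1
      rw [hal, hbe]; push_cast; ring
    rw [k0, k1, mul_assoc, ← Real.mul_rpow (Real.rpow_nonneg hr.le _) (by positivity),
      Real.rpow_neg (by positivity), div_eq_mul_inv]
  -- derivative of the squared norm
  have hsq : ∀ y : EuclideanSpace ℝ (Fin N),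
      HasFDerivAt (fun z : EuclideanSpace ℝ (Fin N) => ‖z‖ ^ 2) (2 • (innerSL ℝ y)) y :=
    fun y => (hasStrictFDerivAt_norm_sq y).hasFDerivAt
  -- first derivative of w at nonzero points
  have hwderiv : ∀ y : EuclideanSpace ℝ (Fin N), y ≠ 0 →
      HasFDerivAt w
        ((C * ((‖y‖ ^ 2 : ℝ)) ^ (-al - 1) * (1 + ((‖y‖ ^ 2 : ℝ)) ^ ν) ^ (-be - 1) *
            (-al + -(al + be * ν) * ((‖y‖ ^ 2 : ℝ)) ^ ν)) • (2 • (innerSL ℝ y))) y := by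
    intro y hy
    have hr : 0 < ‖y‖ := norm_pos_iff.mpr hy
    have hs : (0:ℝ) < ‖y‖ ^ 2 := by positivity
    have h1 := (deriv_one' C al be ν hs).comp_hasFDerivAt y (hsq y)
    refine h1.congr_of_eventuallyEq ?_
    filter_upwards [isOpen_compl_singleton.mem_nhds hy] with z hz
    exact hwP z hz
  -- formula for directional derivatives of w
  have hwfd : ∀ y : EuclideanSpace ℝ (Fin N), y ≠ 0 → ∀ i : Fin N,
      fderiv ℝ w y (EuclideanSpace.single i 1)
        = (C * ((‖y‖ ^ 2 : ℝ)) ^ (-al - 1) * (1 + ((‖y‖ ^ 2 : ℝ)) ^ ν) ^ (-be - 1) *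
            (-al + -(al + be * ν) * ((‖y‖ ^ 2 : ℝ)) ^ ν)) * (2 * y i) := by
    intro y hy i
    rw [(hwderiv y hy).fderiv]
    simp [EuclideanSpace.inner_single_right, real_inner_comm, mul_comm]
  intro x hx
  have hr : 0 < ‖x‖ := norm_pos_iff.mpr hx
  have hs : (0:ℝ) < ‖x‖ ^ 2 := by positivity
  constructor
  · rw [hwP x hx]
    exact mul_pos (mul_pos hCpos (Real.rpow_pos_of_pos hs _))
      (Real.rpow_pos_of_pos (by positivity) _)
  -- second derivatives
  have hterm : ∀ i : Fin N,
      fderiv ℝ (fun y => fderiv ℝ w y (EuclideanSpace.single i 1)) x (EuclideanSpace.single i 1)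
        = 2 * (C * ((‖x‖ ^ 2 : ℝ)) ^ (-al - 1) * (1 + ((‖x‖ ^ 2 : ℝ)) ^ ν) ^ (-be - 1) *
              (-al + -(al + be * ν) * ((‖x‖ ^ 2 : ℝ)) ^ ν))
          + 4 * (C * ((‖x‖ ^ 2 : ℝ)) ^ (-al - 2) * (1 + ((‖x‖ ^ 2 : ℝ)) ^ ν) ^ (-be - 2) *
              (al * (al + 1)
                + ((-al - 1) * (-al + -(al + be * ν)) + (-be - 1) * ν * (-al)
                    + -(al + be * ν) * ν) * ((‖x‖ ^ 2 : ℝ)) ^ ν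
                + ((-al - 1) + (-be - 1) * ν + ν) * -(al + be * ν) *
                    (((‖x‖ ^ 2 : ℝ)) ^ ν) ^ 2)) * (x i) ^ 2 := by
    intro i
    have hEq : (fun y => fderiv ℝ w y (EuclideanSpace.single i 1)) =ᶠ[nhds x]
        (fun y : EuclideanSpace ℝ (Fin N) =>
          (C * ((‖y‖ ^ 2 : ℝ)) ^ (-al - 1) * (1 + ((‖y‖ ^ 2 : ℝ)) ^ ν) ^ (-be - 1) *
            (-al + -(al + be * ν) * ((‖y‖ ^ 2 : ℝ)) ^ ν)) * (2 * y i)) := by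
      filter_upwards [isOpen_compl_singleton.mem_nhds hx] with z hz
      exact hwfd z hz i
    rw [hEq.fderiv_eq]
    have hcomp : HasFDerivAt
        (fun y : EuclideanSpace ℝ (Fin N) =>
          C * ((‖y‖ ^ 2 : ℝ)) ^ (-al - 1) * (1 + ((‖y‖ ^ 2 : ℝ)) ^ ν) ^ (-be - 1) *
            (-al + -(al + be * ν) * ((‖y‖ ^ 2 : ℝ)) ^ ν))
        ((C * ((‖x‖ ^ 2 : ℝ)) ^ (-al - 2) * (1 + ((‖x‖ ^ 2 : ℝ)) ^ ν) ^ (-be - 2) *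
              (al * (al + 1)
                + ((-al - 1) * (-al + -(al + be * ν)) + (-be - 1) * ν * (-al)
                    + -(al + be * ν) * ν) * ((‖x‖ ^ 2 : ℝ)) ^ ν
                + ((-al - 1) + (-be - 1) * ν + ν) * -(al + be * ν) *
                    (((‖x‖ ^ 2 : ℝ)) ^ ν) ^ 2)) • (2 • (innerSL ℝ x))) x :=
      by have := (deriv_two C al be ν hs).comp_hasFDerivAt x (hsq x); exact this
    have hlin : HasFDerivAt (fun y : EuclideanSpace ℝ (Fin N) => 2 * y i)
        ((2:ℝ) • (EuclideanSpace.proj i : EuclideanSpace ℝ (Fin N) →L[ℝ] ℝ)) x :=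
      (EuclideanSpace.proj i : EuclideanSpace ℝ (Fin N) →L[ℝ] ℝ).hasFDerivAt.const_mul 2
    have hprod := hcomp.mul hlin
    erw [hprod.fderiv]
    simp [EuclideanSpace.inner_single_right, real_inner_comm]
    try ring
  -- sum up
  have hsum : ∑ i : Fin N, (x i) ^ 2 = ‖x‖ ^ 2 := by
    rw [EuclideanSpace.norm_eq, Real.sq_sqrt (by positivity)]
    exact Finset.sum_congr rfl fun i _ => by rw [Real.norm_eq_abs, sq_abs]
  have hlap : lap w x
      = (N : ℝ) * (2 * (C * ((‖x‖ ^ 2 : ℝ)) ^ (-al - 1) * (1 + ((‖x‖ ^ 2 : ℝ)) ^ ν) ^ (-be - 1) *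
              (-al + -(al + be * ν) * ((‖x‖ ^ 2 : ℝ)) ^ ν)))
        + 4 * (C * ((‖x‖ ^ 2 : ℝ)) ^ (-al - 2) * (1 + ((‖x‖ ^ 2 : ℝ)) ^ ν) ^ (-be - 2) *
              (al * (al + 1)
                + ((-al - 1) * (-al + -(al + be * ν)) + (-be - 1) * ν * (-al)
                    + -(al + be * ν) * ν) * ((‖x‖ ^ 2 : ℝ)) ^ ν
                + ((-al - 1) + (-be - 1) * ν + ν) * -(al + be * ν) *
                    (((‖x‖ ^ 2 : ℝ)) ^ ν) ^ 2)) * (‖x‖ ^ 2) := by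
    have h0 : lap w x = ∑ i : Fin N,
        fderiv ℝ (fun y => fderiv ℝ w y (EuclideanSpace.single i 1)) x
          (EuclideanSpace.single i 1) := rfl
    rw [h0, Finset.sum_congr rfl fun i _ => hterm i, Finset.sum_add_distrib,
      Finset.sum_const, Finset.card_univ, Fintype.card_fin, nsmul_eq_mul,
      ← Finset.mul_sum, hsum]
  rw [hlap, hwP x hx]
  exact key_identity (N : ℝ) A ν al be C (‖x‖ ^ 2) hN3 hs hνpos hal hbe hC hAeq
end
end

section
/- With the setting of the concentration functionals: a_i ≠ a_j with disjoint balls B_{r_0}(a_i), B_{r_0}(a_j), δ = r_0/3, ψ_j(x) = min{1,|x-a_j|}, T_j(u) = (∫ψ_j|∇u|^2)/(∫|∇u|^2). If u ∈ D^{1,2}(R^N) is nonzero and satisfies both T_i(u) ≤ δ and T_j(u) ≤ δ, then i = j. -/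
open MeasureTheory Real Filter
open scoped RealInnerProductSpace
noncomputable section

theorem concentration_separation (N : ℕ) (hN : 3 ≤ N) (m : ℕ)
    (a : Fin m → EuclideanSpace ℝ (Fin N)) (r₀ : ℝ) (hr₀ : 0 < r₀) (hr₀1 : r₀ ≤ 1)
    (hdisj : ∀ i j, i ≠ j → Disjoint (Metric.closedBall (a i) r₀) (Metric.closedBall (a j) r₀))
    (i j : Fin m) (u : EuclideanSpace ℝ (Fin N) → ℝ)
    (hgrad : Integrable (fun x => ‖gradient u x‖ ^ 2) volume)
    (hpos : 0 < ∫ x : EuclideanSpace ℝ (Fin N), ‖gradient u x‖ ^ 2)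
    (hTi : (∫ x : EuclideanSpace ℝ (Fin N), min 1 ‖x - a i‖ * ‖gradient u x‖ ^ 2) /
        (∫ x : EuclideanSpace ℝ (Fin N), ‖gradient u x‖ ^ 2) ≤ r₀ / 3)
    (hTj : (∫ x : EuclideanSpace ℝ (Fin N), min 1 ‖x - a j‖ * ‖gradient u x‖ ^ 2) /
        (∫ x : EuclideanSpace ℝ (Fin N), ‖gradient u x‖ ^ 2) ≤ r₀ / 3) :
    i = j := by
  by_contra hne
  set G : EuclideanSpace ℝ (Fin N) → ℝ := fun x => ‖gradient u x‖ ^ 2 with hGdef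
  have hGnn : ∀ x, 0 ≤ G x := fun x => sq_nonneg _
  set I : ℝ := ∫ x : EuclideanSpace ℝ (Fin N), G x with hIdef
  have hint : ∀ k : Fin m,
      Integrable (fun x : EuclideanSpace ℝ (Fin N) => min 1 ‖x - a k‖ * G x) volume := by
    intro k
    have hmeas : AEStronglyMeasurable
        (fun x : EuclideanSpace ℝ (Fin N) => min 1 ‖x - a k‖ * G x) volume :=
      ((continuous_const.min ((continuous_id.sub continuous_const).norm)).aestronglyMeasurable).mul
        hgrad.aestronglyMeasurable
    refine hgrad.mono hmeas (Filter.Eventually.of_forall fun x => ?_)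
    have h0 : 0 ≤ min 1 ‖x - a k‖ := le_min zero_le_one (norm_nonneg _)
    have h1 : min 1 ‖x - a k‖ ≤ 1 := min_le_left _ _
    rw [Real.norm_eq_abs, Real.norm_eq_abs, abs_of_nonneg (mul_nonneg h0 (hGnn x)),
      abs_of_nonneg (hGnn x)]
    nlinarith [hGnn x]
  have key : ∀ k : Fin m,
      (∫ x : EuclideanSpace ℝ (Fin N), min 1 ‖x - a k‖ * G x) ≤ r₀ / 3 * I →
      (∫ x in (Metric.closedBall (a k) r₀)ᶜ, G x) ≤ I / 3 := by
    intro k hk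
    have hS : MeasurableSet ((Metric.closedBall (a k) r₀)ᶜ) :=
      measurableSet_closedBall.compl
    have h1 : ∫ x in (Metric.closedBall (a k) r₀)ᶜ, r₀ * G x ≤
        ∫ x in (Metric.closedBall (a k) r₀)ᶜ, min 1 ‖x - a k‖ * G x := by
      refine setIntegral_mono_on ((hgrad.const_mul r₀).integrableOn)
        ((hint k).integrableOn) hS (fun x hx => ?_)
      have hx' : r₀ < ‖x - a k‖ := by
        simpa [Metric.mem_closedBall, dist_eq_norm, not_le] using hx
      exact mul_le_mul_of_nonneg_right (le_min hr₀1 hx'.le) (hGnn x)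
    have h2 : ∫ x in (Metric.closedBall (a k) r₀)ᶜ, min 1 ‖x - a k‖ * G x ≤
        ∫ x : EuclideanSpace ℝ (Fin N), min 1 ‖x - a k‖ * G x :=
      setIntegral_le_integral (hint k) (Filter.Eventually.of_forall fun x =>
        mul_nonneg (le_min zero_le_one (norm_nonneg _)) (hGnn x))
    rw [integral_const_mul] at h1
    have : r₀ * ∫ x in (Metric.closedBall (a k) r₀)ᶜ, G x ≤ r₀ * (I / 3) := by
      calc r₀ * ∫ x in (Metric.closedBall (a k) r₀)ᶜ, G x ≤ r₀ / 3 * I :=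
            le_trans h1 (le_trans h2 hk)
        _ = r₀ * (I / 3) := by ring
    exact (mul_le_mul_iff_right₀ hr₀).mp this
  have hki : (∫ x in (Metric.closedBall (a i) r₀)ᶜ, G x) ≤ I / 3 :=
    key i ((div_le_iff₀ hpos).mp hTi)
  have hkj : (∫ x in (Metric.closedBall (a j) r₀)ᶜ, G x) ≤ I / 3 :=
    key j ((div_le_iff₀ hpos).mp hTj)
  have hsplit : (∫ x in Metric.closedBall (a i) r₀, G x) +
      (∫ x in (Metric.closedBall (a i) r₀)ᶜ, G x) = I :=
    integral_add_compl measurableSet_closedBall hgrad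
  have hsub : Metric.closedBall (a i) r₀ ⊆ (Metric.closedBall (a j) r₀)ᶜ :=
    Set.subset_compl_iff_disjoint_right.mpr (hdisj i j hne)
  have hmono : (∫ x in Metric.closedBall (a i) r₀, G x) ≤
      (∫ x in (Metric.closedBall (a j) r₀)ᶜ, G x) :=
    setIntegral_mono_set hgrad.integrableOn
      (Filter.Eventually.of_forall hGnn) (Filter.Eventually.of_forall hsub)
  have hIpos : 0 < I := hpos
  linarith
end
end

section
/- Let N ≥ 3, a ∈ R^N, θ ∈ (2, N), and let k : R^N → R be continuous bounded with k(a) = ‖k‖_∞ and k(a) - k(x) = o(|x-a|^θ) as x → a. Let u_μ(x) = C_μ (μ^2 + |x-a|^2)^{-(N-2)/2} be normalized so that ∫|u_μ|^{2^*} = 1. Then ∫_{R^N} k(x)|u_μ(x)|^{2^*} dx = ‖k‖_∞ + O(μ^θ) as μ → 0+. -/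
open MeasureTheory Real Filter
open scoped RealInnerProductSpace
noncomputable section

lemma std_integrable (N : ℕ) {s : ℝ} (hs : 0 ≤ s) (hsN : s < N) :
    Integrable (fun y : EuclideanSpace ℝ (Fin N) =>
      ‖y‖ ^ s * ((1:ℝ) + ‖y‖ ^ 2) ^ (-(N:ℝ))) := by
  have hfin : (Module.finrank ℝ (EuclideanSpace ℝ (Fin N)) : ℝ) < 2 * N - s := by
    simp only [finrank_euclideanSpace_fin]; linarith
  have h := integrable_rpow_neg_one_add_norm_sq (E := EuclideanSpace ℝ (Fin N))
    (μ := volume) hfin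
  refine h.mono' ?_ (Eventually.of_forall fun y => ?_)
  · apply Measurable.aestronglyMeasurable
    fun_prop
  · have h1 : (0:ℝ) < 1 + ‖y‖ ^ 2 := by positivity
    have hb : ‖y‖ ^ s ≤ (1 + ‖y‖ ^ 2) ^ (s / 2) := by
      have he : ‖y‖ ^ s = (‖y‖ ^ 2) ^ (s / 2) := by
        rw [← Real.rpow_natCast ‖y‖ 2, ← Real.rpow_mul (norm_nonneg y)]
        congr 1
        push_cast; ring
      rw [he]
      exact Real.rpow_le_rpow (by positivity) (by nlinarith [sq_nonneg ‖y‖]) (by linarith)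
    have hn : ‖‖y‖ ^ s * (1 + ‖y‖ ^ 2) ^ (-(N:ℝ))‖ = ‖y‖ ^ s * (1 + ‖y‖ ^ 2) ^ (-(N:ℝ)) := by
      rw [Real.norm_eq_abs, abs_of_nonneg (by positivity)]
    rw [hn]
    calc ‖y‖ ^ s * (1 + ‖y‖ ^ 2) ^ (-(N:ℝ))
        ≤ (1 + ‖y‖ ^ 2) ^ (s / 2) * (1 + ‖y‖ ^ 2) ^ (-(N:ℝ)) :=
          mul_le_mul_of_nonneg_right hb (Real.rpow_nonneg h1.le _)
      _ = (1 + ‖y‖ ^ 2) ^ (-(2 * (N:ℝ) - s) / 2) := by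
          rw [← Real.rpow_add h1]; congr 1; ring

lemma scale_integral (N : ℕ) {μ : ℝ} (hμ : 0 < μ) (s : ℝ) :
    (∫ x : EuclideanSpace ℝ (Fin N), ‖x‖ ^ s * (μ ^ 2 + ‖x‖ ^ 2) ^ (-(N:ℝ))) =
      μ ^ (s - (N:ℝ)) *
        ∫ y : EuclideanSpace ℝ (Fin N), ‖y‖ ^ s * ((1:ℝ) + ‖y‖ ^ 2) ^ (-(N:ℝ)) := by
  have key := MeasureTheory.Measure.integral_comp_smul volume
    (fun x : EuclideanSpace ℝ (Fin N) => ‖x‖ ^ s * (μ ^ 2 + ‖x‖ ^ 2) ^ (-(N:ℝ))) μ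
  have hpt : ∀ x : EuclideanSpace ℝ (Fin N),
      ‖μ • x‖ ^ s * (μ ^ 2 + ‖μ • x‖ ^ 2) ^ (-(N:ℝ))
        = μ ^ (s - 2 * (N:ℝ)) * (‖x‖ ^ s * ((1:ℝ) + ‖x‖ ^ 2) ^ (-(N:ℝ))) := by
    intro x
    have hns : ‖μ • x‖ = μ * ‖x‖ := by
      rw [norm_smul, Real.norm_eq_abs, abs_of_pos hμ]
    rw [hns, Real.mul_rpow hμ.le (norm_nonneg x)]
    have h2 : μ ^ 2 + (μ * ‖x‖) ^ 2 = μ ^ 2 * (1 + ‖x‖ ^ 2) := by ring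
    rw [h2, Real.mul_rpow (by positivity) (by positivity)]
    have h3 : ((μ:ℝ) ^ 2) ^ (-(N:ℝ)) = μ ^ (-(2 * (N:ℝ))) := by
      rw [← Real.rpow_natCast μ 2, ← Real.rpow_mul hμ.le]
      congr 1; push_cast; ring
    rw [h3, show μ ^ s * ‖x‖ ^ s * (μ ^ (-(2 * (N:ℝ))) * (1 + ‖x‖ ^ 2) ^ (-(N:ℝ)))
        = (μ ^ s * μ ^ (-(2 * (N:ℝ)))) * (‖x‖ ^ s * (1 + ‖x‖ ^ 2) ^ (-(N:ℝ))) from by ring,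
      ← Real.rpow_add hμ]
    congr 2 <;> ring
  simp only [hpt] at key
  rw [MeasureTheory.integral_const_mul, finrank_euclideanSpace_fin] at key
  have habs : |((μ:ℝ) ^ N)⁻¹| = ((μ:ℝ) ^ N)⁻¹ := abs_of_pos (by positivity)
  rw [habs, smul_eq_mul] at key
  have hμN : ((μ:ℝ) ^ N) ≠ 0 := by positivity
  have hmain : (∫ x : EuclideanSpace ℝ (Fin N), ‖x‖ ^ s * (μ ^ 2 + ‖x‖ ^ 2) ^ (-(N:ℝ)))
      = μ ^ (N:ℕ) * (μ ^ (s - 2 * (N:ℝ)) *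
        ∫ y : EuclideanSpace ℝ (Fin N), ‖y‖ ^ s * ((1:ℝ) + ‖y‖ ^ 2) ^ (-(N:ℝ))) := by
    field_simp at key
    linarith [key]
  rw [hmain, ← mul_assoc, ← Real.rpow_natCast μ N, ← Real.rpow_add hμ]
  congr 2
  ring

lemma gen_integrable (N : ℕ) (a : EuclideanSpace ℝ (Fin N)) {s : ℝ} (hs : 0 ≤ s)
    (hsN : s < N) {μ : ℝ} (hμ : 0 < μ) :
    Integrable (fun x : EuclideanSpace ℝ (Fin N) =>
      ‖x - a‖ ^ s * (μ ^ 2 + ‖x - a‖ ^ 2) ^ (-(N:ℝ))) := by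
  have hstd := std_integrable N hs hsN
  have h1 : Integrable (fun x : EuclideanSpace ℝ (Fin N) =>
      ‖μ⁻¹ • x‖ ^ s * ((1:ℝ) + ‖μ⁻¹ • x‖ ^ 2) ^ (-(N:ℝ))) :=
    hstd.comp_smul (inv_ne_zero hμ.ne')
  have hpt : ∀ x : EuclideanSpace ℝ (Fin N),
      ‖x‖ ^ s * (μ ^ 2 + ‖x‖ ^ 2) ^ (-(N:ℝ)) =
        (μ ^ s * ((μ:ℝ) ^ 2) ^ (-(N:ℝ))) *
          (‖μ⁻¹ • x‖ ^ s * ((1:ℝ) + ‖μ⁻¹ • x‖ ^ 2) ^ (-(N:ℝ))) := by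
    intro x
    have hμi : (0:ℝ) < μ⁻¹ := by positivity
    have hn1 : ‖μ⁻¹ • x‖ = μ⁻¹ * ‖x‖ := by
      rw [norm_smul, Real.norm_eq_abs, abs_of_pos hμi]
    rw [hn1, Real.mul_rpow hμi.le (norm_nonneg x)]
    have h2 : 1 + (μ⁻¹ * ‖x‖) ^ 2 = ((μ:ℝ) ^ 2)⁻¹ * (μ ^ 2 + ‖x‖ ^ 2) := by
      field_simp
    rw [h2, Real.mul_rpow (by positivity) (by positivity),
      Real.inv_rpow hμ.le, Real.inv_rpow (by positivity : (0:ℝ) ≤ μ ^ 2)]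
    have hp1 : (0:ℝ) < μ ^ s := Real.rpow_pos_of_pos hμ s
    have hp2 : (0:ℝ) < ((μ:ℝ) ^ 2) ^ (-(N:ℝ)) := Real.rpow_pos_of_pos (by positivity) _
    field_simp
  have h2 : Integrable (fun x : EuclideanSpace ℝ (Fin N) =>
      ‖x‖ ^ s * (μ ^ 2 + ‖x‖ ^ 2) ^ (-(N:ℝ))) := by
    simp only [hpt]
    exact h1.const_mul _
  exact h2.comp_sub_right a

lemma gen_integral (N : ℕ) (a : EuclideanSpace ℝ (Fin N)) {μ : ℝ} (hμ : 0 < μ) (s : ℝ) :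
    (∫ x : EuclideanSpace ℝ (Fin N), ‖x - a‖ ^ s * (μ ^ 2 + ‖x - a‖ ^ 2) ^ (-(N:ℝ))) =
      μ ^ (s - (N:ℝ)) *
        ∫ y : EuclideanSpace ℝ (Fin N), ‖y‖ ^ s * ((1:ℝ) + ‖y‖ ^ 2) ^ (-(N:ℝ)) := by
  rw [← scale_integral N hμ s]
  exact MeasureTheory.integral_sub_right_eq_self
    (fun x : EuclideanSpace ℝ (Fin N) => ‖x‖ ^ s * (μ ^ 2 + ‖x‖ ^ 2) ^ (-(N:ℝ))) a

theorem bubble_energy_expansion (N : ℕ) (hN : 3 ≤ N) (a : EuclideanSpace ℝ (Fin N))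
    (θ : ℝ) (hθ : 2 < θ) (hθN : θ < N)
    (k : EuclideanSpace ℝ (Fin N) → ℝ) (hkc : Continuous k) (hkb : ∃ C, ∀ x, |k x| ≤ C)
    (hmax : ∀ x, k x ≤ k a)
    (hflat : ∀ ε > (0 : ℝ), ∃ δ > (0 : ℝ), ∀ x : EuclideanSpace ℝ (Fin N),
      ‖x - a‖ < δ → k a - k x ≤ ε * ‖x - a‖ ^ θ)
    (Cμ : ℝ → ℝ) (hCμ : ∀ μ : ℝ, 0 < μ → 0 < Cμ μ)
    (u : ℝ → EuclideanSpace ℝ (Fin N) → ℝ)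
    (hu : u = fun μ x => Cμ μ * (μ ^ 2 + ‖x - a‖ ^ 2) ^ (-(((N : ℝ) - 2) / 2)))
    (hnorm : ∀ μ : ℝ, 0 < μ →
      (∫ x : EuclideanSpace ℝ (Fin N), |u μ x| ^ (2 * (N : ℝ) / ((N : ℝ) - 2))) = 1) :
    ∃ C > (0 : ℝ), ∃ μ₁ > (0 : ℝ), ∀ μ : ℝ, 0 < μ → μ < μ₁ →
      |(∫ x : EuclideanSpace ℝ (Fin N),
          k x * |u μ x| ^ (2 * (N : ℝ) / ((N : ℝ) - 2))) - k a| ≤ C * μ ^ θ := by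
  have hN3 : (3:ℝ) ≤ (N:ℝ) := by exact_mod_cast hN
  have hN2 : (0:ℝ) < (N:ℝ) - 2 := by linarith
  set p : ℝ := 2 * (N:ℝ) / ((N:ℝ) - 2) with hp
  obtain ⟨K, hK⟩ := hkb
  have hK0 : 0 ≤ K := le_trans (abs_nonneg _) (hK a)
  obtain ⟨δ, hδ, hδflat⟩ := hflat 1 one_pos
  have hθ0 : (0:ℝ) ≤ θ := by linarith
  have hδθ : (0:ℝ) < δ ^ θ := Real.rpow_pos_of_pos hδ θ
  set M : ℝ := 1 + 2 * K / δ ^ θ with hM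
  have hMq : 0 ≤ 2 * K / δ ^ θ := by positivity
  have hM1 : (1:ℝ) ≤ M := by rw [hM]; linarith
  have hMbound : ∀ x : EuclideanSpace ℝ (Fin N), k a - k x ≤ M * ‖x - a‖ ^ θ := by
    intro x
    have h0 : (0:ℝ) ≤ ‖x - a‖ ^ θ := Real.rpow_nonneg (norm_nonneg _) θ
    by_cases hx : ‖x - a‖ < δ
    · have h1 := hδflat x hx
      nlinarith
    · push_neg at hx
      have h1 : δ ^ θ ≤ ‖x - a‖ ^ θ := Real.rpow_le_rpow hδ.le hx hθ0
      obtain ⟨hx1, hx2⟩ := abs_le.mp (hK x)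
      obtain ⟨ha1, ha2⟩ := abs_le.mp (hK a)
      calc k a - k x ≤ 2 * K := by linarith
        _ = (2 * K / δ ^ θ) * δ ^ θ := by field_simp
        _ ≤ (2 * K / δ ^ θ) * ‖x - a‖ ^ θ := mul_le_mul_of_nonneg_left h1 hMq
        _ ≤ M * ‖x - a‖ ^ θ := by
            apply mul_le_mul_of_nonneg_right _ h0
            rw [hM]; linarith
  set Iθ : ℝ := ∫ y : EuclideanSpace ℝ (Fin N), ‖y‖ ^ θ * ((1:ℝ) + ‖y‖ ^ 2) ^ (-(N:ℝ))
    with hIθ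
  set I0 : ℝ := ∫ y : EuclideanSpace ℝ (Fin N), ‖y‖ ^ (0:ℝ) * ((1:ℝ) + ‖y‖ ^ 2) ^ (-(N:ℝ))
    with hI0
  have hN0 : (0:ℝ) < (N:ℝ) := by linarith
  -- pointwise formula for |u|^p
  have hup : ∀ μ : ℝ, 0 < μ → ∀ x : EuclideanSpace ℝ (Fin N),
      |u μ x| ^ p = (Cμ μ) ^ p * ((μ ^ 2 + ‖x - a‖ ^ 2 : ℝ)) ^ (-(N:ℝ)) := by
    intro μ hμp x
    rw [hu]
    simp only
    have hbase : (0:ℝ) < μ ^ 2 + ‖x - a‖ ^ 2 := by positivity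
    have ht : (0:ℝ) < (μ ^ 2 + ‖x - a‖ ^ 2) ^ (-(((N:ℝ) - 2) / 2)) :=
      Real.rpow_pos_of_pos hbase _
    rw [abs_of_pos (mul_pos (hCμ μ hμp) ht), Real.mul_rpow (hCμ μ hμp).le ht.le,
      ← Real.rpow_mul hbase.le]
    have hexp : -(((N:ℝ) - 2) / 2) * p = -(N:ℝ) := by
      rw [hp]
      field_simp [hN2.ne']
    rw [hexp]
  have hA : ∀ μ : ℝ, 0 < μ → (Cμ μ) ^ p * (μ ^ ((0:ℝ) - (N:ℝ)) * I0) = 1 := by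
    intro μ hμp
    have h2 : (∫ x : EuclideanSpace ℝ (Fin N), |u μ x| ^ p)
        = (Cμ μ) ^ p * ∫ x : EuclideanSpace ℝ (Fin N),
            ‖x - a‖ ^ (0:ℝ) * (μ ^ 2 + ‖x - a‖ ^ 2) ^ (-(N:ℝ)) := by
      rw [← MeasureTheory.integral_const_mul]
      congr 1
      funext x
      rw [hup μ hμp x, Real.rpow_zero, one_mul]
    rw [hI0, ← gen_integral N a hμp 0, ← h2]
    exact hnorm μ hμp
  have hIθnonneg : 0 ≤ Iθ := by
    rw [hIθ]; exact integral_nonneg fun y => by positivity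
  have hI0nonneg : 0 ≤ I0 := by
    rw [hI0]; exact integral_nonneg fun y => by positivity
  have hI0pos : 0 < I0 := by
    have h1 := hA 1 one_pos
    rw [Real.one_rpow, one_mul] at h1
    rcases lt_or_eq_of_le hI0nonneg with h | h
    · exact h
    · exfalso; rw [← h, mul_zero] at h1; norm_num at h1
  refine ⟨M * Iθ / I0 + 1, ?_, 1, one_pos, fun μ hμp hμ1 => ?_⟩
  · have h0 : 0 ≤ M * Iθ / I0 := div_nonneg (mul_nonneg (by linarith) hIθnonneg) hI0pos.le
    linarith
  have hCp : (0:ℝ) < (Cμ μ) ^ p := Real.rpow_pos_of_pos (hCμ μ hμp) p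
  have hf0 : Integrable (fun x : EuclideanSpace ℝ (Fin N) =>
      ‖x - a‖ ^ (0:ℝ) * (μ ^ 2 + ‖x - a‖ ^ 2) ^ (-(N:ℝ))) :=
    gen_integrable N a le_rfl hN0 hμp
  have hfθ : Integrable (fun x : EuclideanSpace ℝ (Fin N) =>
      ‖x - a‖ ^ θ * (μ ^ 2 + ‖x - a‖ ^ 2) ^ (-(N:ℝ))) :=
    gen_integrable N a hθ0 hθN hμp
  have hfeq : (fun x : EuclideanSpace ℝ (Fin N) => |u μ x| ^ p)
      = fun x => (Cμ μ) ^ p * (‖x - a‖ ^ (0:ℝ) * (μ ^ 2 + ‖x - a‖ ^ 2) ^ (-(N:ℝ))) :=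
    funext fun x => by rw [hup μ hμp x, Real.rpow_zero, one_mul]
  have hfu : Integrable (fun x : EuclideanSpace ℝ (Fin N) => |u μ x| ^ p) := by
    rw [hfeq]; exact hf0.const_mul _
  have hku : Integrable (fun x : EuclideanSpace ℝ (Fin N) => k x * |u μ x| ^ p) :=
    hfu.bdd_mul hkc.aestronglyMeasurable (c := K) (Eventually.of_forall fun x => by rw [Real.norm_eq_abs]; exact hK x)
  have hnorm1 := hnorm μ hμp
  have hdiff : (∫ x : EuclideanSpace ℝ (Fin N), k x * |u μ x| ^ p) - k a
      = ∫ x : EuclideanSpace ℝ (Fin N), (k x - k a) * |u μ x| ^ p := by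
    have h3 : (∫ x : EuclideanSpace ℝ (Fin N), (k x - k a) * |u μ x| ^ p)
        = ∫ x : EuclideanSpace ℝ (Fin N),
            (k x * |u μ x| ^ p - k a * |u μ x| ^ p) := by
      congr 1; funext x; ring
    rw [h3, integral_sub hku (hfu.const_mul (k a)), MeasureTheory.integral_const_mul,
      hnorm1, mul_one]
  rw [hdiff]
  have habs : |∫ x : EuclideanSpace ℝ (Fin N), (k x - k a) * |u μ x| ^ p|
      ≤ ∫ x : EuclideanSpace ℝ (Fin N), (k a - k x) * |u μ x| ^ p := by
    have h1 := MeasureTheory.norm_integral_le_integral_norm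
      (μ := volume) (fun x : EuclideanSpace ℝ (Fin N) => (k x - k a) * |u μ x| ^ p)
    rw [Real.norm_eq_abs] at h1
    refine h1.trans (le_of_eq ?_)
    congr 1
    funext x
    rw [Real.norm_eq_abs, abs_mul, abs_of_nonpos (by linarith [hmax x] : k x - k a ≤ 0),
      abs_of_nonneg (by positivity : (0:ℝ) ≤ |u μ x| ^ p)]
    ring
  have hintlhs : Integrable (fun x : EuclideanSpace ℝ (Fin N) =>
      (k a - k x) * |u μ x| ^ p) := by
    have h4 : (fun x : EuclideanSpace ℝ (Fin N) => (k a - k x) * |u μ x| ^ p)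
        = fun x => k a * |u μ x| ^ p - k x * |u μ x| ^ p := by funext x; ring
    rw [h4]; exact (hfu.const_mul (k a)).sub hku
  have hintrhs : Integrable (fun x : EuclideanSpace ℝ (Fin N) =>
      (M * (Cμ μ) ^ p) * (‖x - a‖ ^ θ * (μ ^ 2 + ‖x - a‖ ^ 2) ^ (-(N:ℝ)))) :=
    hfθ.const_mul _
  have hmono : (∫ x : EuclideanSpace ℝ (Fin N), (k a - k x) * |u μ x| ^ p)
      ≤ ∫ x : EuclideanSpace ℝ (Fin N),
          (M * (Cμ μ) ^ p) * (‖x - a‖ ^ θ * (μ ^ 2 + ‖x - a‖ ^ 2) ^ (-(N:ℝ))) := by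
    apply integral_mono hintlhs hintrhs
    intro x
    dsimp only
    rw [hup μ hμp x]
    have hb := hMbound x
    calc (k a - k x) * ((Cμ μ) ^ p * (μ ^ 2 + ‖x - a‖ ^ 2) ^ (-(N:ℝ)))
        ≤ (M * ‖x - a‖ ^ θ) * ((Cμ μ) ^ p * (μ ^ 2 + ‖x - a‖ ^ 2) ^ (-(N:ℝ))) := by
          apply mul_le_mul_of_nonneg_right hb
          positivity
      _ = (M * (Cμ μ) ^ p) * (‖x - a‖ ^ θ * (μ ^ 2 + ‖x - a‖ ^ 2) ^ (-(N:ℝ))) := by ring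
  have hrhs : (∫ x : EuclideanSpace ℝ (Fin N),
        (M * (Cμ μ) ^ p) * (‖x - a‖ ^ θ * (μ ^ 2 + ‖x - a‖ ^ 2) ^ (-(N:ℝ))))
      = (M * (Cμ μ) ^ p) * (μ ^ (θ - (N:ℝ)) * Iθ) := by
    rw [MeasureTheory.integral_const_mul, gen_integral N a hμp θ, hIθ]
  have hCval : (Cμ μ) ^ p * I0 = μ ^ ((N:ℝ)) := by
    have h1 := hA μ hμp
    have e1 : μ ^ ((0:ℝ) - (N:ℝ)) = (μ ^ ((N:ℝ)))⁻¹ := by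
      rw [zero_sub, Real.rpow_neg hμp.le]
    rw [e1] at h1
    have hμN : (0:ℝ) < μ ^ ((N:ℝ)) := Real.rpow_pos_of_pos hμp _
    field_simp at h1
    rw [Real.rpow_natCast μ N]
    linarith [Real.rpow_natCast μ N]
  have hfinal : (M * (Cμ μ) ^ p) * (μ ^ (θ - (N:ℝ)) * Iθ) = (M * Iθ / I0) * μ ^ θ := by
    have h2 : (Cμ μ) ^ p = μ ^ ((N:ℝ)) / I0 := by
      rw [eq_div_iff hI0pos.ne']; exact hCval
    rw [h2, show M * (μ ^ ((N:ℝ)) / I0) * (μ ^ (θ - (N:ℝ)) * Iθ)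
        = (M * Iθ / I0) * (μ ^ ((N:ℝ)) * μ ^ (θ - (N:ℝ))) from by ring,
      ← Real.rpow_add hμp, show (N:ℝ) + (θ - (N:ℝ)) = θ from by ring]
  have hμθ : (0:ℝ) ≤ μ ^ θ := Real.rpow_nonneg hμp.le θ
  have hfin2 : (M * Iθ / I0) * μ ^ θ ≤ (M * Iθ / I0 + 1) * μ ^ θ := by
    apply mul_le_mul_of_nonneg_right _ hμθ
    linarith
  calc |∫ x : EuclideanSpace ℝ (Fin N), (k x - k a) * |u μ x| ^ p|
      ≤ ∫ x : EuclideanSpace ℝ (Fin N), (k a - k x) * |u μ x| ^ p := habs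
    _ ≤ ∫ x : EuclideanSpace ℝ (Fin N),
          (M * (Cμ μ) ^ p) * (‖x - a‖ ^ θ * (μ ^ 2 + ‖x - a‖ ^ 2) ^ (-(N:ℝ))) := hmono
    _ = (M * (Cμ μ) ^ p) * (μ ^ (θ - (N:ℝ)) * Iθ) := hrhs
    _ = (M * Iθ / I0) * μ ^ θ := hfinal
    _ ≤ (M * Iθ / I0 + 1) * μ ^ θ := hfin2
end
end

section
/- Let N ≥ 3 and u_μ(x) = C_μ (μ^2 + |x - a|^2)^{-(N-2)/2} be the standard Aubin–Talenti bubble centered at a ≠ 0, normalized in L^{2^*}(R^N). Then there exist a constant c > 0 and μ_1 > 0 such that ∫_{R^N} u_μ^2(x)/|x|^2 dx ≥ c μ^2 for all 0 < μ < μ_1. -/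
open MeasureTheory Real Filter
open scoped RealInnerProductSpace
open scoped ENNReal NNReal
open Metric
noncomputable section

lemma nontriv_euc {N : ℕ} (hN : 3 ≤ N) : Nontrivial (EuclideanSpace ℝ (Fin N)) := by
  refine ⟨EuclideanSpace.single ⟨0, by omega⟩ 1, 0, fun h => ?_⟩
  have := congrArg norm h
  simp [EuclideanSpace.norm_single] at this

lemma invsq_int {N : ℕ} (hN : 3 ≤ N) {R : ℝ} (hR : 0 < R) :
    IntegrableOn (fun x : EuclideanSpace ℝ (Fin N) => (‖x‖ ^ 2)⁻¹) (ball 0 R) := by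
  haveI := nontriv_euc hN
  set f : EuclideanSpace ℝ (Fin N) → ℝ := fun x => (‖x‖ ^ 2)⁻¹ with hf
  set t : ℝ := 2⁻¹ with ht
  have ht0 : (0:ℝ) < t := by norm_num [ht]
  have ht1 : t < 1 := by norm_num [ht]
  set A : ℕ → Set (EuclideanSpace ℝ (Fin N)) :=
    fun k => ball 0 (R * t ^ k) \ ball 0 (R * t ^ (k + 1)) with hA
  constructor
  · exact ((measurable_norm.pow_const 2).inv).aestronglyMeasurable
  · have cover : ball (0 : EuclideanSpace ℝ (Fin N)) R \ {0} ⊆ ⋃ k, A k := by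
      intro x hx
      obtain ⟨hxR, hx0⟩ := hx
      have hs : 0 < ‖x‖ := by simpa [norm_pos_iff] using hx0
      have hxR' : ‖x‖ < R := by simpa [mem_ball, dist_eq_norm] using hxR
      have hex : ∃ n, R * t ^ (n + 1) ≤ ‖x‖ := by
        obtain ⟨n, hn⟩ := exists_pow_lt_of_lt_one (div_pos hs hR) ht1
        have h1 : t ^ n * R < ‖x‖ := (lt_div_iff₀ hR).mp hn
        have h2 : t ^ (n+1) ≤ t ^ n := pow_le_pow_of_le_one ht0.le ht1.le (by omega)
        exact ⟨n, by nlinarith⟩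
      classical
      have hspec : R * t ^ (Nat.find hex + 1) ≤ ‖x‖ := Nat.find_spec hex
      have hup : ‖x‖ < R * t ^ (Nat.find hex) := by
        rcases Nat.eq_zero_or_pos (Nat.find hex) with h0 | h0
        · rw [h0]; simpa using hxR'
        · have hmin := Nat.find_min hex (m := Nat.find hex - 1) (by omega)
          push_neg at hmin
          have : Nat.find hex - 1 + 1 = Nat.find hex := by omega
          rwa [this] at hmin
      refine Set.mem_iUnion.2 ⟨Nat.find hex, ?_, ?_⟩
      · simpa [mem_ball, dist_eq_norm] using hup
      · simp only [mem_ball, dist_eq_norm, not_lt, sub_zero, Set.mem_setOf_eq]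
        simpa using hspec
    have hAmeas : ∀ k, MeasurableSet (A k) := fun k =>
      measurableSet_ball.diff measurableSet_ball
    have hsing : volume ({(0 : EuclideanSpace ℝ (Fin N))} : Set _) = 0 := measure_singleton _
    have step1 : ∫⁻ x in ball (0 : EuclideanSpace ℝ (Fin N)) R, ‖f x‖₊ ∂volume
        = ∫⁻ x in ball (0 : EuclideanSpace ℝ (Fin N)) R \ {0}, ‖f x‖₊ ∂volume := by
      refine (setLIntegral_congr ?_).symm
      exact diff_ae_eq_self.mpr (measure_mono_null Set.inter_subset_right hsing)
    have hv1 : volume (ball (0 : EuclideanSpace ℝ (Fin N)) 1) < ⊤ := measure_ball_lt_top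
    set D : ℝ≥0∞ := ENNReal.ofReal (4 * R ^ N / R ^ 2) *
      volume (ball (0 : EuclideanSpace ℝ (Fin N)) 1) with hD
    have term : ∀ k : ℕ, ∫⁻ x in A k, ‖f x‖₊ ∂volume ≤ D * (2⁻¹ : ℝ≥0∞) ^ k := by
      intro k
      have hrk : (0:ℝ) < R * t ^ (k+1) := mul_pos hR (pow_pos ht0 _)
      have hbd : ∀ x ∈ A k, (‖f x‖₊ : ℝ≥0∞)
          ≤ ENNReal.ofReal (((R * t ^ (k+1)) ^ 2)⁻¹) := by
        intro x hx
        have hxlow : R * t ^ (k + 1) ≤ ‖x‖ := by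
          have h2 := hx.2
          simp only [mem_ball, dist_eq_norm, not_lt, sub_zero] at h2
          simpa using h2
        have h1 : ((R * t ^ (k+1)) ^ 2) ≤ ‖x‖ ^ 2 := by nlinarith
        have h2 : f x ≤ ((R * t ^ (k+1)) ^ 2)⁻¹ := inv_anti₀ (by positivity) h1
        have h3 : (0:ℝ) ≤ f x := by rw [hf]; positivity
        rw [← enorm_eq_nnnorm, Real.enorm_eq_ofReal h3]
        exact ENNReal.ofReal_le_ofReal h2
      calc ∫⁻ x in A k, ‖f x‖₊ ∂volume
          ≤ ∫⁻ _x in A k, ENNReal.ofReal (((R * t ^ (k+1)) ^ 2)⁻¹) ∂volume :=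
            setLIntegral_mono' (hAmeas k) hbd
        _ = ENNReal.ofReal (((R * t ^ (k+1)) ^ 2)⁻¹) * volume (A k) := by
            rw [setLIntegral_const]
        _ ≤ ENNReal.ofReal (((R * t ^ (k+1)) ^ 2)⁻¹) *
            volume (ball (0 : EuclideanSpace ℝ (Fin N)) (R * t ^ k)) := by
            gcongr
            exact Set.diff_subset
        _ ≤ D * (2⁻¹ : ℝ≥0∞) ^ k := by
            rw [Measure.addHaar_ball _ _ (by positivity : (0:ℝ) ≤ R * t ^ k)]
            rw [finrank_euclideanSpace, Fintype.card_fin, hD,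
              mul_right_comm (ENNReal.ofReal (4 * R ^ N / R ^ 2)) (volume _), ← mul_assoc]
            gcongr ?_ * _
            rw [← ENNReal.ofReal_mul (by positivity)]
            have h2inv : ((2⁻¹ : ℝ≥0∞)) ^ k = ENNReal.ofReal (t ^ k) := by
              rw [ENNReal.ofReal_pow ht0.le, ht,
                ENNReal.ofReal_inv_of_pos (by norm_num : (0:ℝ) < 2)]
              norm_num
            rw [h2inv, ← ENNReal.ofReal_mul (by positivity)]
            apply ENNReal.ofReal_le_ofReal
            have h1 : (R * t ^ k) ^ N = R ^ N * t ^ (k * N) := by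
              rw [mul_pow, ← pow_mul]
            have h2 : ((R * t ^ (k+1)) ^ 2) = R ^ 2 * t ^ (2 * k + 2) := by
              rw [mul_pow, ← pow_mul]; ring_nf
            rw [h1, h2]
            have hkey : t ^ (k * N) ≤ t ^ (3 * k) :=
              pow_le_pow_of_le_one ht0.le ht1.le (by nlinarith)
            have h4 : t ^ (2 * k + 2) * (4 * t ^ k) = t ^ (3 * k) := by
              have h42 : (4:ℝ) * t ^ 2 = 1 := by norm_num [ht]
              calc t ^ (2*k+2) * (4 * t ^ k) = t ^ (2*k) * t^k * (4 * t ^ 2) := by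
                    rw [pow_add]; ring
                _ = t ^ (2*k) * t^k := by rw [h42]; ring
                _ = t ^ (3*k) := by rw [← pow_add]; ring_nf
            rw [mul_inv, mul_comm ((R^2)⁻¹) _, ← mul_assoc]
            have hposR : (0:ℝ) < R ^ N := pow_pos hR N
            have hpost : (0:ℝ) < t ^ (2*k+2) := pow_pos ht0 _
            calc (t ^ (2*k+2))⁻¹ * (R ^ 2)⁻¹ * R ^ N * t ^ (k*N)
                ≤ (t ^ (2*k+2))⁻¹ * (R ^ 2)⁻¹ * R ^ N * t ^ (3*k) := by
                  have hc : (0:ℝ) ≤ (t ^ (2*k+2))⁻¹ * (R ^ 2)⁻¹ * R ^ N := by positivity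
                  exact mul_le_mul_of_nonneg_left hkey hc
              _ = 4 * R ^ N / R ^ 2 * t ^ k := by
                  rw [← h4]; field_simp
    calc ∫⁻ x in ball (0 : EuclideanSpace ℝ (Fin N)) R, ‖f x‖₊ ∂volume
        = ∫⁻ x in ball (0 : EuclideanSpace ℝ (Fin N)) R \ {0}, ‖f x‖₊ ∂volume := step1
      _ ≤ ∫⁻ x in ⋃ k, A k, ‖f x‖₊ ∂volume := lintegral_mono_set cover
      _ ≤ ∑' k, ∫⁻ x in A k, ‖f x‖₊ ∂volume := lintegral_iUnion_le _ _
      _ ≤ ∑' k : ℕ, D * (2⁻¹ : ℝ≥0∞) ^ k := ENNReal.tsum_le_tsum term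
      _ = D * (1 - 2⁻¹)⁻¹ := by rw [ENNReal.tsum_mul_left, ENNReal.tsum_geometric]
      _ < ⊤ := by
          apply ENNReal.mul_lt_top
          · exact ENNReal.mul_lt_top ENNReal.ofReal_lt_top hv1
          · apply ENNReal.inv_lt_top.mpr
            simp

lemma norm_scaling {N : ℕ} (a : EuclideanSpace ℝ (Fin N)) {μ : ℝ} (hμ : 0 < μ) :
    ∫ x : EuclideanSpace ℝ (Fin N), ((μ ^ 2 + ‖x - a‖ ^ 2) ^ (-(N:ℝ))) =
      μ ^ (-(N:ℝ)) * ∫ z : EuclideanSpace ℝ (Fin N), (((1:ℝ) + ‖z‖ ^ 2) ^ (-(N:ℝ))) := by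
  have h1 : ∫ x : EuclideanSpace ℝ (Fin N), ((μ ^ 2 + ‖x - a‖ ^ 2) ^ (-(N:ℝ)))
      = ∫ y : EuclideanSpace ℝ (Fin N), ((μ ^ 2 + ‖y‖ ^ 2) ^ (-(N:ℝ))) :=
    integral_sub_right_eq_self (fun y => (μ ^ 2 + ‖y‖ ^ 2) ^ (-(N:ℝ))) a
  have h2 := Measure.integral_comp_smul_of_nonneg (volume : Measure (EuclideanSpace ℝ (Fin N)))
      (fun y => (μ ^ 2 + ‖y‖ ^ 2) ^ (-(N:ℝ))) μ (hR := hμ.le)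
  simp only [finrank_euclideanSpace, Fintype.card_fin] at h2
  have h3 : ∀ z : EuclideanSpace ℝ (Fin N),
      (μ ^ 2 + ‖μ • z‖ ^ 2) ^ (-(N:ℝ)) = (μ ^ 2) ^ (-(N:ℝ)) * ((1:ℝ) + ‖z‖ ^ 2) ^ (-(N:ℝ)) := by
    intro z
    rw [norm_smul, Real.norm_eq_abs, abs_of_pos hμ, mul_pow,
      show μ ^ 2 + μ ^ 2 * ‖z‖ ^ 2 = μ ^ 2 * (1 + ‖z‖ ^ 2) by ring,
      Real.mul_rpow (by positivity) (by positivity)]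
  simp only [h3] at h2
  rw [integral_const_mul] at h2
  rw [h1]
  have h4 : (μ ^ 2 : ℝ) ^ (-(N:ℝ)) = μ ^ (-(2 * N : ℝ)) := by
    rw [← Real.rpow_natCast μ 2, ← Real.rpow_mul hμ.le]
    norm_num
  have h5 : ((μ : ℝ) ^ (N : ℕ))⁻¹ = μ ^ (-(N:ℝ)) := by
    rw [← Real.rpow_natCast μ N, ← Real.rpow_neg hμ.le]
  rw [smul_eq_mul, h4, h5] at h2
  -- h2 : μ ^ (-(2N)) * K = μ ^ (-(N:ℝ)) * ∫ y ...
  have h6 : (∫ y : EuclideanSpace ℝ (Fin N), ((μ ^ 2 + ‖y‖ ^ 2) ^ (-(N:ℝ))))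
      = μ ^ ((N:ℝ)) * (μ ^ (-(2 * N : ℝ)) *
        ∫ z : EuclideanSpace ℝ (Fin N), (((1:ℝ) + ‖z‖ ^ 2) ^ (-(N:ℝ)))) := by
    rw [h2, ← mul_assoc, ← Real.rpow_add hμ]
    norm_num
  rw [h6, ← mul_assoc, ← Real.rpow_add hμ,
    show (N:ℝ) + -(2*(N:ℝ)) = -(N:ℝ) by ring]

lemma Cmu_sq {N : ℕ} (hN : 3 ≤ N) (a : EuclideanSpace ℝ (Fin N))
    (Cμ : ℝ → ℝ) (hCμ : ∀ μ : ℝ, 0 < μ → 0 < Cμ μ)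
    (u : ℝ → EuclideanSpace ℝ (Fin N) → ℝ)
    (hu : u = fun μ x => Cμ μ * (μ ^ 2 + ‖x - a‖ ^ 2) ^ (-(((N : ℝ) - 2) / 2)))
    (hnorm : ∀ μ : ℝ, 0 < μ →
      (∫ x : EuclideanSpace ℝ (Fin N), |u μ x| ^ (2 * (N : ℝ) / ((N : ℝ) - 2))) = 1) :
    ∃ κ > (0:ℝ), ∀ μ : ℝ, 0 < μ → Cμ μ ^ 2 = κ * μ ^ ((N:ℝ) - 2) := by
  have hN3 : (3:ℝ) ≤ (N:ℝ) := by exact_mod_cast hN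
  have hN2 : (0:ℝ) < (N:ℝ) - 2 := by linarith
  set p : ℝ := 2 * (N:ℝ) / ((N:ℝ) - 2) with hp
  set K : ℝ := ∫ z : EuclideanSpace ℝ (Fin N), (((1:ℝ) + ‖z‖ ^ 2) ^ (-(N:ℝ))) with hK
  have key : ∀ μ : ℝ, 0 < μ → Cμ μ ^ p * (μ ^ (-(N:ℝ)) * K) = 1 := by
    intro μ hμ
    have hpt : ∀ x : EuclideanSpace ℝ (Fin N),
        |u μ x| ^ p = Cμ μ ^ p * (μ ^ 2 + ‖x - a‖ ^ 2) ^ (-(N:ℝ)) := by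
      intro x
      have hT : (0:ℝ) < μ ^ 2 + ‖x - a‖ ^ 2 := by positivity
      have hupos : 0 < u μ x := by
        rw [hu]; exact mul_pos (hCμ μ hμ) (Real.rpow_pos_of_pos hT _)
      rw [abs_of_pos hupos, hu]
      simp only
      rw [Real.mul_rpow (hCμ μ hμ).le (Real.rpow_nonneg hT.le _),
        ← Real.rpow_mul hT.le]
      congr 2
      rw [hp]
      field_simp
    have h1 := hnorm μ hμ
    simp only [hpt] at h1
    rw [integral_const_mul, norm_scaling a hμ, ← hK] at h1
    exact h1
  have hK1 := key 1 one_pos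
  rw [Real.one_rpow, one_mul] at hK1
  have hC1 : (0:ℝ) < Cμ 1 ^ p := Real.rpow_pos_of_pos (hCμ 1 one_pos) p
  have hKpos : 0 < K := by nlinarith
  set q : ℝ := ((N:ℝ) - 2) / (N:ℝ) with hq'
  refine ⟨(K ^ q)⁻¹, by positivity, ?_⟩
  intro μ hμ
  have h2 := key μ hμ
  have hCp : Cμ μ ^ p = μ ^ ((N:ℝ)) * K⁻¹ := by
    have hne : μ ^ (-(N:ℝ)) * K ≠ 0 := by positivity
    have h3 : Cμ μ ^ p = (μ ^ (-(N:ℝ)) * K)⁻¹ := by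
      field_simp at h2 ⊢
      linarith [h2]
    rw [h3, mul_inv, Real.rpow_neg hμ.le, inv_inv]
  have hNne : (N:ℝ) ≠ 0 := by linarith
  have hN2ne : (N:ℝ) - 2 ≠ 0 := ne_of_gt hN2
  have hq : p * q = 2 := by
    rw [hp, hq']
    field_simp
  have e1 : Cμ μ ^ 2 = Cμ μ ^ ((2:ℝ)) := by
    rw [← Real.rpow_natCast (Cμ μ) 2]; norm_num
  have hNq : (N:ℝ) * q = (N:ℝ) - 2 := by
    rw [hq']; field_simp
  calc Cμ μ ^ 2 = (Cμ μ ^ p) ^ q := by rw [e1, ← hq, Real.rpow_mul (hCμ μ hμ).le]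
    _ = (μ ^ ((N:ℝ))) ^ q * (K ^ q)⁻¹ := by
        rw [hCp, Real.mul_rpow (Real.rpow_nonneg hμ.le _) (inv_nonneg.mpr hKpos.le),
          Real.inv_rpow hKpos.le]
    _ = (K ^ q)⁻¹ * μ ^ ((N:ℝ) - 2) := by
        rw [← Real.rpow_mul hμ.le, hNq]
        ring

lemma integrable_f {N : ℕ} (hN : 3 ≤ N) (a : EuclideanSpace ℝ (Fin N))
    {μ C : ℝ} (hμ : 0 < μ) (hC : 0 < C) :
    Integrable (fun x : EuclideanSpace ℝ (Fin N) =>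
      (C * (μ ^ 2 + ‖x - a‖ ^ 2) ^ (-(((N : ℝ) - 2) / 2))) ^ 2 / ‖x‖ ^ 2) := by
  have hN3 : (3:ℝ) ≤ (N:ℝ) := by exact_mod_cast hN
  set e : ℝ := ((N:ℝ) - 2) / 2 with he
  set f : EuclideanSpace ℝ (Fin N) → ℝ :=
    fun x => (C * (μ ^ 2 + ‖x - a‖ ^ 2) ^ (-e)) ^ 2 / ‖x‖ ^ 2 with hf
  have hfnn : ∀ x, 0 ≤ f x := fun x => div_nonneg (sq_nonneg _) (sq_nonneg _)
  have hmeas : Measurable f := by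
    have h1 : Continuous fun x : EuclideanSpace ℝ (Fin N) => μ ^ 2 + ‖x - a‖ ^ 2 :=
      continuous_const.add (((continuous_id.sub continuous_const).norm).pow 2)
    have h2 : Continuous fun x : EuclideanSpace ℝ (Fin N) =>
        (C * (μ ^ 2 + ‖x - a‖ ^ 2) ^ (-e)) ^ 2 := by
      apply Continuous.pow
      apply Continuous.mul continuous_const
      apply h1.rpow_const
      intro x
      left
      have : (0:ℝ) < μ ^ 2 + ‖x - a‖ ^ 2 := by positivity
      exact ne_of_gt this
    exact h2.measurable.div (continuous_norm.pow 2).measurable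
  -- pointwise formula for the square
  have hsq : ∀ x : EuclideanSpace ℝ (Fin N),
      (C * (μ ^ 2 + ‖x - a‖ ^ 2) ^ (-e)) ^ 2
        = C ^ 2 * (μ ^ 2 + ‖x - a‖ ^ 2) ^ (-((N:ℝ) - 2)) := by
    intro x
    have hT : (0:ℝ) < μ ^ 2 + ‖x - a‖ ^ 2 := by positivity
    rw [mul_pow, ← Real.rpow_natCast ((μ ^ 2 + ‖x - a‖ ^ 2) ^ (-e)) 2,
      ← Real.rpow_mul hT.le]
    congr 1
    rw [he]
    push_cast
    ring
  set R : ℝ := 1 + 2 * ‖a‖ with hR'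
  have hR : 0 < R := by positivity
  have hS : IntegrableOn f (ball (0 : EuclideanSpace ℝ (Fin N)) R) := by
    set M : ℝ := C ^ 2 * (μ ^ 2) ^ (-((N:ℝ) - 2)) with hM
    have hMnn : 0 ≤ M := by positivity
    refine Integrable.mono' ((invsq_int hN hR).const_mul M)
      hmeas.aestronglyMeasurable.restrict (ae_of_all _ fun x => ?_)
    rw [Real.norm_eq_abs, abs_of_nonneg (hfnn x)]
    have hT : (0:ℝ) < μ ^ 2 + ‖x - a‖ ^ 2 := by positivity
    have h1 : (μ ^ 2 + ‖x - a‖ ^ 2) ^ (-((N:ℝ) - 2)) ≤ (μ ^ 2) ^ (-((N:ℝ) - 2)) :=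
      Real.rpow_le_rpow_of_nonpos (by positivity) (by nlinarith [sq_nonneg ‖x - a‖])
        (by linarith)
    rcases eq_or_lt_of_le (norm_nonneg x) with h0 | h0
    · rw [hf]
      simp only [← h0]
      norm_num
    · rw [hf]
      simp only
      rw [hsq x, div_eq_mul_inv, hM]
      have : (0:ℝ) < ‖x‖ ^ 2 := by positivity
      apply mul_le_mul_of_nonneg_right _ (by positivity)
      exact mul_le_mul_of_nonneg_left h1 (by positivity)
  have hSc : IntegrableOn f (ball (0 : EuclideanSpace ℝ (Fin N)) R)ᶜ := by
    set s : ℝ := 2 * (N:ℝ) - 2 with hs'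
    set C' : ℝ := C ^ 2 * 4 ^ ((N:ℝ) - 2) * 2 ^ s with hC''
    have hint : Integrable (fun x : EuclideanSpace ℝ (Fin N) => C' * (1 + ‖x‖) ^ (-s)) := by
      apply Integrable.const_mul
      apply integrable_one_add_norm (μ := volume)
      rw [finrank_euclideanSpace, Fintype.card_fin, hs']
      linarith
    refine Integrable.mono' hint.integrableOn hmeas.aestronglyMeasurable.restrict ?_
    rw [ae_restrict_iff' measurableSet_ball.compl]
    refine ae_of_all _ fun x hx => ?_
    have hxR : R ≤ ‖x‖ := by
      simp only [Set.mem_compl_iff, mem_ball, dist_eq_norm, not_lt, sub_zero] at hx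
      simpa using hx
    have hx1 : (1:ℝ) ≤ ‖x‖ := by rw [hR'] at hxR; nlinarith [norm_nonneg a]
    have hx0 : (0:ℝ) < ‖x‖ := by linarith
    have hxa : ‖x‖ / 2 ≤ ‖x - a‖ := by
      have h1 : ‖x‖ - ‖a‖ ≤ ‖x - a‖ := norm_sub_norm_le x a
      rw [hR'] at hxR
      nlinarith
    rw [Real.norm_eq_abs, abs_of_nonneg (hfnn x)]
    have hT : (0:ℝ) < μ ^ 2 + ‖x - a‖ ^ 2 := by positivity
    have key1 : (μ ^ 2 + ‖x - a‖ ^ 2) ^ (-((N:ℝ) - 2))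
        ≤ (‖x‖ ^ 2 / 4) ^ (-((N:ℝ) - 2)) := by
      apply Real.rpow_le_rpow_of_nonpos (by positivity)
      · nlinarith [sq_nonneg μ]
      · linarith
    have key2 : (‖x‖ ^ 2 / 4) ^ (-((N:ℝ) - 2))
        = 4 ^ ((N:ℝ) - 2) * ‖x‖ ^ (-(2 * (N:ℝ) - 4)) := by
      have e1 : ((‖x‖:ℝ) ^ 2) ^ (-((N:ℝ) - 2)) = ‖x‖ ^ (-(2 * (N:ℝ) - 4)) := by
        rw [← Real.rpow_natCast ‖x‖ 2, ← Real.rpow_mul hx0.le]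
        congr 1
        push_cast
        ring
      rw [Real.div_rpow (by positivity) (by norm_num), e1,
        Real.rpow_neg (by norm_num : (0:ℝ) ≤ 4), div_eq_mul_inv, inv_inv, mul_comm]
    have key3 : ‖x‖ ^ (-(2 * (N:ℝ) - 4)) * (‖x‖ ^ 2)⁻¹ = ‖x‖ ^ (-s) := by
      rw [← Real.rpow_natCast ‖x‖ 2, ← Real.rpow_neg hx0.le, ← Real.rpow_add hx0, hs']
      congr 1
      push_cast
      ring
    have key4 : ‖x‖ ^ (-s) ≤ 2 ^ s * (1 + ‖x‖) ^ (-s) := by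
      have h1 : (1 + ‖x‖) / 2 ≤ ‖x‖ := by linarith
      have h2 : ‖x‖ ^ (-s) ≤ ((1 + ‖x‖) / 2) ^ (-s) :=
        Real.rpow_le_rpow_of_nonpos (by positivity) h1 (by rw [hs']; linarith)
      calc ‖x‖ ^ (-s) ≤ ((1 + ‖x‖) / 2) ^ (-s) := h2
        _ = 2 ^ s * (1 + ‖x‖) ^ (-s) := by
            rw [Real.div_rpow (by positivity) (by norm_num),
              Real.rpow_neg (by positivity : (0:ℝ) ≤ 1 + ‖x‖),
              Real.rpow_neg (by norm_num : (0:ℝ) ≤ 2)]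
            field_simp
    calc f x = C ^ 2 * (μ ^ 2 + ‖x - a‖ ^ 2) ^ (-((N:ℝ) - 2)) * (‖x‖ ^ 2)⁻¹ := by
          rw [hf]; simp only; rw [hsq x, div_eq_mul_inv]
      _ ≤ C ^ 2 * ((‖x‖ ^ 2 / 4) ^ (-((N:ℝ) - 2))) * (‖x‖ ^ 2)⁻¹ := by
          apply mul_le_mul_of_nonneg_right _ (by positivity)
          exact mul_le_mul_of_nonneg_left key1 (by positivity)
      _ = C ^ 2 * 4 ^ ((N:ℝ) - 2) * (‖x‖ ^ (-(2 * (N:ℝ) - 4)) * (‖x‖ ^ 2)⁻¹) := by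
          rw [key2]; ring
      _ = C ^ 2 * 4 ^ ((N:ℝ) - 2) * ‖x‖ ^ (-s) := by rw [key3]
      _ ≤ C ^ 2 * 4 ^ ((N:ℝ) - 2) * (2 ^ s * (1 + ‖x‖) ^ (-s)) := by
          apply mul_le_mul_of_nonneg_left key4 (by positivity)
      _ = C' * (1 + ‖x‖) ^ (-s) := by rw [hC'']; ring
  have := hS.union hSc
  rw [Set.union_compl_self] at this
  exact integrableOn_univ.mp this

theorem bubble_hardy_lower_bound (N : ℕ) (hN : 3 ≤ N) (a : EuclideanSpace ℝ (Fin N))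
    (ha : a ≠ 0)
    (Cμ : ℝ → ℝ) (hCμ : ∀ μ : ℝ, 0 < μ → 0 < Cμ μ)
    (u : ℝ → EuclideanSpace ℝ (Fin N) → ℝ)
    (hu : u = fun μ x => Cμ μ * (μ ^ 2 + ‖x - a‖ ^ 2) ^ (-(((N : ℝ) - 2) / 2)))
    (hnorm : ∀ μ : ℝ, 0 < μ →
      (∫ x : EuclideanSpace ℝ (Fin N), |u μ x| ^ (2 * (N : ℝ) / ((N : ℝ) - 2))) = 1) :
    ∃ c > (0 : ℝ), ∃ μ₁ > (0 : ℝ), ∀ μ : ℝ, 0 < μ → μ < μ₁ →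
      c * μ ^ 2 ≤ ∫ x : EuclideanSpace ℝ (Fin N), u μ x ^ 2 / ‖x‖ ^ 2 := by
  haveI := nontriv_euc hN
  have hN3 : (3:ℝ) ≤ (N:ℝ) := by exact_mod_cast hN
  obtain ⟨κ, hκpos, hκ⟩ := Cmu_sq hN a Cμ hCμ u hu hnorm
  have ha0 : 0 < ‖a‖ := norm_pos_iff.mpr ha
  set v : ℝ := (volume (Metric.ball (0 : EuclideanSpace ℝ (Fin N)) 1)).toReal with hv'
  have hv : 0 < v :=
    ENNReal.toReal_pos (measure_ball_pos volume 0 one_pos).ne' measure_ball_lt_top.ne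
  refine ⟨κ * 2 ^ (-((N:ℝ) - 2)) * v / (4 * ‖a‖ ^ 2), by positivity,
    min ‖a‖ 1, by positivity, ?_⟩
  intro μ hμ hμ1
  have hμa : μ < ‖a‖ := lt_of_lt_of_le hμ1 (min_le_left _ _)
  set f : EuclideanSpace ℝ (Fin N) → ℝ := fun x => u μ x ^ 2 / ‖x‖ ^ 2 with hf
  have hInt : Integrable f := by
    simp only [hf, hu]
    exact integrable_f hN a hμ (hCμ μ hμ)
  have hfnn : ∀ x, 0 ≤ f x := fun x => div_nonneg (sq_nonneg _) (sq_nonneg _)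
  set b : ℝ := Cμ μ ^ 2 * (2 * μ ^ 2) ^ (-((N:ℝ) - 2)) / (4 * ‖a‖ ^ 2) with hb'
  have hb : ∀ x ∈ Metric.ball a μ, b ≤ f x := by
    intro x hx
    have hxa : ‖x - a‖ < μ := by
      rw [Metric.mem_ball, dist_eq_norm] at hx
      exact hx
    have hT : (0:ℝ) < μ ^ 2 + ‖x - a‖ ^ 2 := by positivity
    have hsq : u μ x ^ 2 = Cμ μ ^ 2 * (μ ^ 2 + ‖x - a‖ ^ 2) ^ (-((N:ℝ) - 2)) := by
      rw [hu]
      simp only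
      rw [mul_pow, ← Real.rpow_natCast ((μ ^ 2 + ‖x - a‖ ^ 2) ^ (-(((N:ℝ) - 2) / 2))) 2,
        ← Real.rpow_mul hT.le]
      congr 1
      push_cast
      ring
    have hxup : ‖x‖ ≤ 2 * ‖a‖ := by
      have h1 : ‖x‖ ≤ ‖x - a‖ + ‖a‖ := by
        simpa using norm_add_le (x - a) a
      nlinarith
    have hx0 : 0 < ‖x‖ := by
      have h1 : ‖a‖ - ‖x - a‖ ≤ ‖x‖ := by
        have := norm_sub_norm_le a x
        have h2 : ‖a - x‖ = ‖x - a‖ := norm_sub_rev a x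
        linarith [norm_sub_norm_le a x, h2 ▸ norm_sub_norm_le a x]
      nlinarith
    have hnum : Cμ μ ^ 2 * (2 * μ ^ 2) ^ (-((N:ℝ) - 2))
        ≤ Cμ μ ^ 2 * (μ ^ 2 + ‖x - a‖ ^ 2) ^ (-((N:ℝ) - 2)) := by
      apply mul_le_mul_of_nonneg_left _ (sq_nonneg _)
      apply Real.rpow_le_rpow_of_nonpos hT (by nlinarith [norm_nonneg (x - a), hxa]) (by linarith)
    rw [hf, hb']
    simp only
    rw [hsq]
    apply div_le_div₀ (by positivity) hnum (by positivity) (by nlinarith)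
  have h1 := setIntegral_ge_of_const_le_real measurableSet_ball measure_ball_lt_top.ne hb
    hInt.integrableOn
  have h2 : (∫ x in Metric.ball a μ, f x) ≤ ∫ x, f x :=
    setIntegral_le_integral hInt (by filter_upwards with x using hfnn x)
  have hvol : (volume (Metric.ball a μ)).toReal = μ ^ (N:ℕ) * v := by
    rw [Measure.addHaar_ball _ _ hμ.le, finrank_euclideanSpace, Fintype.card_fin,
      ENNReal.toReal_mul, ENNReal.toReal_ofReal (by positivity)]
  have harith : κ * 2 ^ (-((N:ℝ) - 2)) * v / (4 * ‖a‖ ^ 2) * μ ^ 2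
      = b * (volume (Metric.ball a μ)).toReal := by
    rw [hvol, hb', hκ μ hμ, Real.mul_rpow (by norm_num) (by positivity)]
    have e2 : ((μ:ℝ) ^ 2) ^ (-((N:ℝ) - 2)) = μ ^ (-(2 * (N:ℝ) - 4)) := by
      rw [← Real.rpow_natCast μ 2, ← Real.rpow_mul hμ.le]
      congr 1
      push_cast
      ring
    have e3 : (μ:ℝ) ^ (N:ℕ) = μ ^ ((N:ℝ)) := (Real.rpow_natCast μ N).symm
    have e4 : μ ^ ((N:ℝ) - 2) * μ ^ (-(2 * (N:ℝ) - 4)) * μ ^ ((N:ℝ)) = μ ^ 2 := by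
      rw [← Real.rpow_add hμ, ← Real.rpow_add hμ,
        show (N:ℝ) - 2 + -(2 * (N:ℝ) - 4) + (N:ℝ) = ((2:ℕ):ℝ) by push_cast; ring,
        Real.rpow_natCast]
    rw [e2, e3]
    calc κ * 2 ^ (-((N:ℝ) - 2)) * v / (4 * ‖a‖ ^ 2) * μ ^ 2
        = κ * 2 ^ (-((N:ℝ) - 2)) * v / (4 * ‖a‖ ^ 2) *
            (μ ^ ((N:ℝ) - 2) * μ ^ (-(2 * (N:ℝ) - 4)) * μ ^ ((N:ℝ))) := by rw [e4]
      _ = κ * μ ^ ((N:ℝ) - 2) * (2 ^ (-((N:ℝ) - 2)) * μ ^ (-(2 * (N:ℝ) - 4))) /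
            (4 * ‖a‖ ^ 2) * (μ ^ ((N:ℝ)) * v) := by ring
  calc κ * 2 ^ (-((N:ℝ) - 2)) * v / (4 * ‖a‖ ^ 2) * μ ^ 2
      = b * (volume (Metric.ball a μ)).toReal := harith
    _ ≤ ∫ x in Metric.ball a μ, f x := h1
    _ ≤ ∫ x, f x := h2

end
end
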